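/- arXiv:2603.21617 — 3 statements merged into one kernel-verified Lean document; each statement's English description precedes it below -/
import Mathlib

section
/- Net property from r-divisions: Let S be a set of n disjoint segments with trapezoidal decomposition TD(S), and let B be an s-division of the dual of TD(S). Let R ⊆ S be the set of segments that contribute a (non-vertical) side to the boundary of some region of the s-division. If e is a vertical segment whose interior intersects no segment of R, then e lies entirely within a single region of the s-division, and hence e intersects at most 2s segments of S (since each region is a union of at most s trapezoids, each bounded above and below by at most one segment of S). -/
/-!
A vertical segment is connected, so if it meets no region boundary it cannot leave the region
containing any one of its points. That region is covered by at most `s` trapezoids, each met by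
at most two segments of `S`, so at most `2 s` segments of `S` meet the vertical segment.
-/

open Set

def segOf (s : (ℝ × ℝ) × (ℝ × ℝ)) : Set (ℝ × ℝ) := segment ℝ s.1 s.2

theorem IsPreconnected.subset_of_disjoint_frontier {X : Type*} [TopologicalSpace X]
    {e t : Set X} (he : IsPreconnected e) (hfr : Disjoint e (frontier t))
    (hne : (e ∩ t).Nonempty) : e ⊆ t := by
  have closure_to_interior : ∀ x ∈ e, x ∈ closure t → x ∈ interior t := fun x hx hc =>
    by_contra fun hi => hfr.ne_of_mem hx ⟨hc, hi⟩ rfl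
  obtain ⟨x, hxe, hxt⟩ := hne
  refine Subset.trans ?_ interior_subset
  refine he.subset_of_closure_inter_subset isOpen_interior
    ⟨x, hxe, closure_to_interior x hxe (subset_closure hxt)⟩ ?_
  rintro y ⟨hyc, hye⟩
  exact closure_to_interior y hye (closure_mono interior_subset hyc)

theorem exists_mem_subset_of_isPreconnected_of_disjoint_frontier {X : Type*}
    [TopologicalSpace X] {𝓡 : Set (Set X)} (hcover : ⋃₀ 𝓡 = univ) {e : Set X}
    (he : IsPreconnected e) (hne : e.Nonempty) (hfr : ∀ γ ∈ 𝓡, Disjoint e (frontier γ)) :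
    ∃ γ ∈ 𝓡, e ⊆ γ := by
  obtain ⟨x, hx⟩ := hne
  obtain ⟨γ, hγ, hxγ⟩ := sUnion_eq_univ_iff.1 hcover x
  exact ⟨γ, hγ, he.subset_of_disjoint_frontier (hfr γ hγ) ⟨x, hx, hxγ⟩⟩

theorem card_setOf_meets_le_of_subset_biUnion {ι X : Type*} (S : Finset ι) (f : ι → Set X)
    {e : Set X} (T : Finset (Set X)) (k : ℕ) (he : e ⊆ ⋃ τ ∈ T, τ)
    (hT : ∀ τ ∈ T, Nat.card {t | t ∈ S ∧ (f t ∩ τ).Nonempty} ≤ k) :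
    Nat.card {t | t ∈ S ∧ (f t ∩ e).Nonempty} ≤ T.card * k := by
  have hcover : {t | t ∈ S ∧ (f t ∩ e).Nonempty} ⊆
      ⋃ τ ∈ T, {t | t ∈ S ∧ (f t ∩ τ).Nonempty} := by
    rintro t ⟨htS, p, hpt, hpe⟩
    obtain ⟨τ, hτ, hpτ⟩ := mem_iUnion₂.1 (he hpe)
    exact mem_iUnion₂.2 ⟨τ, hτ, htS, p, hpt, hpτ⟩
  have hfin : (⋃ τ ∈ T, {t | t ∈ S ∧ (f t ∩ τ).Nonempty}).Finite :=
    S.finite_toSet.subset (iUnion₂_subset fun _ _ _ ht => ht.1)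
  rw [Nat.card_coe_set_eq]
  calc {t | t ∈ S ∧ (f t ∩ e).Nonempty}.ncard
      ≤ (⋃ τ ∈ T, {t | t ∈ S ∧ (f t ∩ τ).Nonempty}).ncard := ncard_le_ncard hcover hfin
    _ ≤ ∑ τ ∈ T, {t | t ∈ S ∧ (f t ∩ τ).Nonempty}.ncard := T.set_ncard_biUnion_le _
    _ ≤ T.card * k := by
      simpa only [smul_eq_mul] using Finset.sum_le_card_nsmul T _ k fun τ hτ =>
        Nat.card_coe_set_eq _ ▸ hT τ hτ

theorem net_property_from_r_division_general
    (S R : Finset ((ℝ × ℝ) × (ℝ × ℝ))) (s : ℕ)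
    (𝓡 : Set (Set (ℝ × ℝ)))
    (hcover : ⋃₀ 𝓡 = Set.univ)
    (V : Set (ℝ × ℝ))
    (hfront : ∀ γ ∈ 𝓡, frontier γ ⊆ (⋃ t ∈ R, segOf t) ∪ V)
    (htrap : ∀ γ ∈ 𝓡, ∃ T : Finset (Set (ℝ × ℝ)), T.card ≤ s ∧ (γ ⊆ ⋃ τ ∈ T, τ) ∧
      ∀ τ ∈ T, Nat.card {t : (ℝ × ℝ) × (ℝ × ℝ) | t ∈ S ∧ (segOf t ∩ τ).Nonempty} ≤ 2)
    (x y₁ y₂ : ℝ) (e : Set (ℝ × ℝ)) (he : e = openSegment ℝ (x, y₁) (x, y₂))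
    (havoidR : ∀ t ∈ R, segOf t ∩ e = ∅)
    (havoidV : V ∩ e = ∅) :
    (∃ γ ∈ 𝓡, e ⊆ γ) ∧
    Nat.card {t : (ℝ × ℝ) × (ℝ × ℝ) | t ∈ S ∧ (segOf t ∩ e).Nonempty} ≤ 2 * s := by
  have hconn : IsPreconnected e := he ▸ (convex_openSegment _ _).isPreconnected
  have hne : e.Nonempty := he ▸ ⟨_, midpoint_mem_openSegment _ _⟩
  have hfr : ∀ γ ∈ 𝓡, Disjoint e (frontier γ) := fun γ hγ =>
    Disjoint.mono_right (hfront γ hγ) <| disjoint_union_right.2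
      ⟨disjoint_iUnion₂_right.2 fun t ht => (disjoint_iff_inter_eq_empty.2 (havoidR t ht)).symm,
        (disjoint_iff_inter_eq_empty.2 havoidV).symm⟩
  obtain ⟨γ, hγ, heγ⟩ :=
    exists_mem_subset_of_isPreconnected_of_disjoint_frontier hcover hconn hne hfr
  obtain ⟨T, hTs, hγT, hT⟩ := htrap γ hγ
  refine ⟨⟨γ, hγ, heγ⟩, ?_⟩
  calc _ ≤ T.card * 2 := card_setOf_meets_le_of_subset_biUnion S segOf T 2 (heγ.trans hγT) hT
    _ ≤ 2 * s := by omega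

/-- Net property from `r`-divisions.  `S` is a set of disjoint segments, `𝓡` is the set
of regions of an `s`-division of (the dual of) `TD(S)`: the regions partition the plane,
the non-vertical part of each region boundary lies on the segments of `R ⊆ S` (the
segments contributing a side to some region boundary; `V` is the vertical part), and
each region is a union of at most `s` trapezoids, each of which meets at most 2 segments
of `S` (its top and bottom).  If `e` is a vertical segment whose interior meets no
segment of `R` (and, by general position, no vertical boundary part), then `e` lies in a
single region and meets at most `2·s` segments of `S`. -/
theorem net_property_from_r_division
    (S R : Finset ((ℝ × ℝ) × (ℝ × ℝ))) (hRS : R ⊆ S) (s : ℕ)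
    (𝓡 : Set (Set (ℝ × ℝ)))
    (hcover : ⋃₀ 𝓡 = Set.univ)
    (hdisj : 𝓡.PairwiseDisjoint id)
    (V : Set (ℝ × ℝ))
    (hfront : ∀ γ ∈ 𝓡, frontier γ ⊆ (⋃ t ∈ R, segOf t) ∪ V)
    (htrap : ∀ γ ∈ 𝓡, ∃ T : Finset (Set (ℝ × ℝ)), T.card ≤ s ∧ (γ ⊆ ⋃ τ ∈ T, τ) ∧
      ∀ τ ∈ T, Nat.card {t : (ℝ × ℝ) × (ℝ × ℝ) | t ∈ S ∧ (segOf t ∩ τ).Nonempty} ≤ 2)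
    (x y₁ y₂ : ℝ) (e : Set (ℝ × ℝ)) (he : e = openSegment ℝ (x, y₁) (x, y₂))
    (hene : e.Nonempty)
    (havoidR : ∀ t ∈ R, segOf t ∩ e = ∅)
    (havoidV : V ∩ e = ∅) :
    (∃ γ ∈ 𝓡, e ⊆ γ) ∧
    Nat.card {t : (ℝ × ℝ) × (ℝ × ℝ) | t ∈ S ∧ (segOf t ∩ e).Nonempty} ≤ 2 * s :=
  net_property_from_r_division_general S R s 𝓡 hcover V hfront htrap x y₁ y₂ e he havoidR havoidV
end

section
/- Recurrence solution: Let b ≥ 2 and let T : ℕ × ℕ × ℕ → ℝ satisfy T(n,h,X) ≤ max over all (h₁,…,h_b, X₁,…,X_b) with Σᵢ hᵢ ≤ h + b and Σᵢ Xᵢ ≤ X of [ Σᵢ T(n/b, hᵢ, Xᵢ) + C·(n + h·log(h+2) + f(b)·X) ], with base case T(n,h,X) ≤ C·(n + h·log(h+2) + f(b)·X) when n ≤ b. Then T(n,h,X) ≤ C'·(n + h·log(h+2) + f(b)·X)·(log n / log b + 1) for a constant C' depending only on C (and assuming f(b) ≥ 1, log b ≥ 1). -/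
/-!
Induct on the depth `j` with the stronger invariant
`T(b^j, h, X) ≤ C · Φ(b^j, h, X) · (j + 1)`, where `Φ(N, h, X) = 65 N + 2 φ(h) + 2 f(b) X` and
`φ(x) = x log(x + 2)`. Since `φ` is superadditive and monotone, the children of a node, whose
budgets sum to at most `h + b` and `X`, contribute at most `C · Φ(b^(j+1), h + b, X) · (j + 1)`.
The cost of raising `h` to `h + b` is `2 (j + 1) (φ(h + b) - φ(h)) ≲ 2 (j + 1) b log(h + 2)`, which
is at most `φ(h)` when `h ≥ 2 (j + 1) b` and at most `64 b^(j+1)` otherwise, because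
`(j + 1)² b² ≤ 8 b^(j+1)`.
-/

open Finset Real

noncomputable def mulLogAddTwo (x : ℝ) : ℝ := x * log (x + 2)

lemma mulLogAddTwo_nonneg {x : ℝ} (hx : 0 ≤ x) : 0 ≤ mulLogAddTwo x :=
  mul_nonneg hx (log_nonneg (by linarith))

lemma mulLogAddTwo_le_mulLogAddTwo {x y : ℝ} (hx : 0 ≤ x) (hxy : x ≤ y) :
    mulLogAddTwo x ≤ mulLogAddTwo y :=
  mul_le_mul hxy (log_le_log (by linarith) (by linarith)) (log_nonneg (by linarith))
    (hx.trans hxy)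

lemma sum_mulLogAddTwo_le {ι : Type*} (s : Finset ι) {g : ι → ℝ} (hg : ∀ i ∈ s, 0 ≤ g i) :
    ∑ i ∈ s, mulLogAddTwo (g i) ≤ mulLogAddTwo (∑ i ∈ s, g i) := by
  calc ∑ i ∈ s, mulLogAddTwo (g i) ≤ ∑ i ∈ s, g i * log (∑ i ∈ s, g i + 2) := by
        refine sum_le_sum fun i hi => mul_le_mul_of_nonneg_left ?_ (hg i hi)
        exact log_le_log (by linarith [hg i hi]) (by linarith [single_le_sum hg hi])
    _ = mulLogAddTwo (∑ i ∈ s, g i) := by rw [← sum_mul, mulLogAddTwo]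

lemma mulLogAddTwo_add_sub_le {x a : ℝ} (hx : 0 ≤ x) (ha : 0 ≤ a) :
    mulLogAddTwo (x + a) - mulLogAddTwo x ≤ a * (1 + log (x + 2) + log (a + 1)) := by
  have hratio : x * (log (x + a + 2) - log (x + 2)) ≤ a := by
    rw [← log_div (by linarith) (by linarith)]
    calc x * log ((x + a + 2) / (x + 2)) ≤ x * ((x + a + 2) / (x + 2) - 1) :=
          mul_le_mul_of_nonneg_left (log_le_sub_one_of_pos (by positivity)) hx
      _ = a * (x / (x + 2)) := by field_simp; ring
      _ ≤ a := mul_le_of_le_one_right ha ((div_le_one (by linarith)).2 (by linarith))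
  have hsplit : log (x + a + 2) ≤ log (x + 2) + log (a + 1) := by
    rw [← log_mul (by linarith) (by linarith)]
    exact log_le_log (by linarith) (by nlinarith)
  have := mul_le_mul_of_nonneg_left hsplit ha
  unfold mulLogAddTwo
  linarith

lemma mul_log_add_two_le {a x : ℝ} (ha : 0 ≤ a) (hx : 0 ≤ x) :
    a * log (x + 2) ≤ mulLogAddTwo x + mulLogAddTwo a := by
  rcases le_total a x with hax | hxa
  · have := mul_le_mul_of_nonneg_right hax (log_nonneg (by linarith) : 0 ≤ log (x + 2))
    linarith [mulLogAddTwo_nonneg ha, show mulLogAddTwo x = x * log (x + 2) from rfl]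
  · have := mul_le_mul_of_nonneg_left (log_le_log (by linarith) (by linarith) :
      log (x + 2) ≤ log (a + 2)) ha
    linarith [mulLogAddTwo_nonneg hx, show mulLogAddTwo a = a * log (a + 2) from rfl]

lemma sq_le_two_mul_two_pow (m : ℕ) : m ^ 2 ≤ 2 * 2 ^ m := by
  induction m with
  | zero => norm_num
  | succ m ih => nlinarith [m.lt_two_pow_self, pow_succ 2 m]

lemma sq_mul_sq_le_eight_mul_pow {b m : ℕ} (hb : 2 ≤ b) (hm : 2 ≤ m) :
    m ^ 2 * b ^ 2 ≤ 8 * b ^ m := by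
  obtain ⟨k, rfl⟩ : ∃ k, m = k + 2 := ⟨m - 2, by omega⟩
  calc (k + 2) ^ 2 * b ^ 2 ≤ (2 * 2 ^ (k + 2)) * b ^ 2 := by
        gcongr; exact sq_le_two_mul_two_pow _
    _ = 8 * (2 ^ k * b ^ 2) := by ring
    _ ≤ 8 * (b ^ k * b ^ 2) := by gcongr
    _ = 8 * b ^ (k + 2) := by ring

lemma two_mul_mulLogAddTwo_add_sub_le {b m : ℕ} (hb : 2 ≤ b) (hm : 2 ≤ m) {x : ℝ}
    (hx : 0 ≤ x) :
    2 * m * (mulLogAddTwo (x + b) - mulLogAddTwo x) ≤ mulLogAddTwo x + 64 * (b : ℝ) ^ m := by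
  set a : ℝ := 2 * m * b
  have hbR : (2 : ℝ) ≤ b := by exact_mod_cast hb
  have hmR : (2 : ℝ) ≤ m := by exact_mod_cast hm
  have hpow : (m : ℝ) ^ 2 * (b : ℝ) ^ 2 ≤ 8 * (b : ℝ) ^ m := by
    exact_mod_cast sq_mul_sq_le_eight_mul_pow hb hm
  have ha : 0 ≤ a := by positivity
  have hinc := mul_le_mul_of_nonneg_left (mulLogAddTwo_add_sub_le hx (by linarith : (0 : ℝ) ≤ b))
    (by positivity : (0 : ℝ) ≤ 2 * m)
  have hlogh := mul_log_add_two_le ha hx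
  have hloga : mulLogAddTwo a ≤ a * (a + 1) :=
    mul_le_mul_of_nonneg_left (by linarith [log_le_sub_one_of_pos (by linarith : 0 < a + 2)]) ha
  have hlogb : log (b + 1) ≤ b := by
    linarith [log_le_sub_one_of_pos (by linarith : (0 : ℝ) < b + 1)]
  have hlogb' := mul_le_mul_of_nonneg_left hlogb ha
  have hquad : a + a * (a + 1) + a * b ≤ 8 * ((m : ℝ) ^ 2 * (b : ℝ) ^ 2) := by
    have hmb : 4 ≤ (m : ℝ) * b := by nlinarith
    simp only [a]
    nlinarith [mul_le_mul_of_nonneg_right hmb (by positivity : (0 : ℝ) ≤ m * b),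
      mul_le_mul_of_nonneg_right hmR (by positivity : (0 : ℝ) ≤ m * b * b)]
  have hexpand : 2 * m * (b * (1 + log (x + 2) + log (b + 1))) =
      a + a * log (x + 2) + a * log (b + 1) := by ring
  linarith

noncomputable def potential (K w N : ℝ) (h X : ℕ) : ℝ := K * N + 2 * mulLogAddTwo h + 2 * w * X

lemma sum_potential_le {b : ℕ} (K : ℝ) {w : ℝ} (hw : 0 ≤ w) (N : ℝ) {h X : ℕ}
    {hs Xs : Fin b → ℕ} (hhs : ∑ i, hs i ≤ h + b) (hXs : ∑ i, Xs i ≤ X) :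
    ∑ i, potential K w N (hs i) (Xs i) ≤ potential K w (b * N) (h + b) X := by
  have hphi : ∑ i, mulLogAddTwo (hs i) ≤ mulLogAddTwo (h + b) := by
    refine (sum_mulLogAddTwo_le _ fun i _ => Nat.cast_nonneg (hs i)).trans ?_
    exact mulLogAddTwo_le_mulLogAddTwo (by positivity) (by exact_mod_cast hhs)
  have hX : w * ∑ i, (Xs i : ℝ) ≤ w * X := mul_le_mul_of_nonneg_left (by exact_mod_cast hXs) hw
  simp only [potential, sum_add_distrib, ← mul_sum, sum_const, card_univ, Fintype.card_fin,
    nsmul_eq_mul]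
  push_cast
  linarith

theorem apply_pow_le_of_recurrence {b : ℕ} {C w : ℝ} {T : ℕ → ℕ → ℕ → ℝ}
    (hb : 2 ≤ b) (hC : 0 ≤ C) (hw : 0 ≤ w)
    (hbase : ∀ n h X : ℕ, n ≤ b → T n h X ≤ C * ((n : ℝ) + mulLogAddTwo h + w * X))
    (hrec : ∀ n h X : ℕ, b < n → ∃ hs Xs : Fin b → ℕ,
      (∑ i, hs i) ≤ h + b ∧ (∑ i, Xs i) ≤ X ∧
      T n h X ≤ (∑ i, T (n / b) (hs i) (Xs i)) + C * ((n : ℝ) + mulLogAddTwo h + w * X))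
    (j h X : ℕ) :
    T (b ^ j) h X ≤ C * potential 65 w ((b : ℝ) ^ j) h X * (j + 1) := by
  have hwX : ∀ X : ℕ, 0 ≤ C * (w * X) := fun X => mul_nonneg hC (mul_nonneg hw X.cast_nonneg)
  have hphi : ∀ h : ℕ, 0 ≤ C * mulLogAddTwo h :=
    fun h => mul_nonneg hC (mulLogAddTwo_nonneg h.cast_nonneg)
  have of_base : ∀ j h X : ℕ, b ^ j ≤ b →
      T (b ^ j) h X ≤ C * potential 65 w ((b : ℝ) ^ j) h X * (j + 1) := by
    intro j h X hj
    have hT := hbase _ h X hj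
    have hN : 0 ≤ C * (b : ℝ) ^ j := by positivity
    have hj0 : (0 : ℝ) ≤ j := j.cast_nonneg
    push_cast at hT
    unfold potential
    nlinarith [hphi h, hwX X, mul_nonneg hj0 hN, mul_nonneg hj0 (hphi h), mul_nonneg hj0 (hwX X)]
  induction j generalizing h X with
  | zero => exact of_base 0 h X (by rw [pow_zero]; omega)
  | succ j ih =>
    rcases le_or_gt (b ^ (j + 1)) b with hsmall | hlarge
    · exact of_base (j + 1) h X hsmall
    have hj : j ≠ 0 := by rintro rfl; simp at hlarge
    obtain ⟨hs, Xs, hhs, hXs, hT⟩ := hrec _ h X hlarge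
    rw [pow_succ, Nat.mul_div_cancel _ (by omega), ← pow_succ] at hT
    have hchildren : ∑ i, T (b ^ j) (hs i) (Xs i) ≤
        C * potential 65 w ((b : ℝ) ^ (j + 1)) (h + b) X * (j + 1) :=
      calc ∑ i, T (b ^ j) (hs i) (Xs i)
          ≤ ∑ i, C * potential 65 w ((b : ℝ) ^ j) (hs i) (Xs i) * (j + 1) :=
            sum_le_sum fun i _ => ih (hs i) (Xs i)
        _ = C * (∑ i, potential 65 w ((b : ℝ) ^ j) (hs i) (Xs i)) * (j + 1) := by
            rw [← sum_mul, ← mul_sum]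
        _ ≤ C * potential 65 w ((b : ℝ) ^ (j + 1)) (h + b) X * (j + 1) := by
            rw [pow_succ']
            gcongr
            exact sum_potential_le 65 hw _ hhs hXs
    have hinc := mul_le_mul_of_nonneg_left
      (two_mul_mulLogAddTwo_add_sub_le hb (by omega : 2 ≤ j + 1) (Nat.cast_nonneg h)) hC
    unfold potential at hchildren ⊢
    push_cast at hT hinc hchildren ⊢
    linear_combination hT + hchildren + hinc + hwX X

/-- Solution of the divide-and-conquer recurrence.  Suppose `T` satisfies
`T(n,h,X) ≤ max Σᵢ T(n/b, hᵢ, Xᵢ) + C·(n + h·log(h+2) + f(b)·X)` over all tuples with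
`Σ hᵢ ≤ h + b` and `Σ Xᵢ ≤ X` (equivalently, for each `(n,h,X)` there is such a tuple
realizing the bound), with base case `T(n,h,X) ≤ C·(n + h·log(h+2) + f(b)·X)` for
`n ≤ b`.  Then `T(n,h,X) ≤ C'·(n + h·log(h+2) + f(b)·X)·(log n / log b + 1)` for a
constant `C'` depending only on `C` (here `b ≥ 2`, `f(b) ≥ 1`, `log` is the natural
logarithm, and `n` is a power of `b`). -/
theorem divide_and_conquer_recurrence (C : ℝ) (hC : 0 < C) :
    ∃ C' : ℝ, 0 < C' ∧
      ∀ (b : ℕ), 2 ≤ b →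
      ∀ (f : ℕ → ℝ), 1 ≤ f b →
      ∀ (T : ℕ → ℕ → ℕ → ℝ),
        (∀ n h X : ℕ, n ≤ b →
          T n h X ≤ C * ((n : ℝ) + h * Real.log (h + 2) + f b * X)) →
        (∀ n h X : ℕ, b < n →
          ∃ hs Xs : Fin b → ℕ,
            (∑ i, hs i) ≤ h + b ∧ (∑ i, Xs i) ≤ X ∧
            T n h X ≤ (∑ i, T (n / b) (hs i) (Xs i)) +
              C * ((n : ℝ) + h * Real.log (h + 2) + f b * X)) →
        ∀ n h X : ℕ, (∃ j : ℕ, n = b ^ j) → 1 ≤ n →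
          T n h X ≤ C' * ((n : ℝ) + h * Real.log (h + 2) + f b * X) *
            (Real.log n / Real.log b + 1) := by
  refine ⟨65 * C, by positivity, fun b hb f hf T hbase hrec n h X ⟨j, hn⟩ _ => ?_⟩
  subst hn
  have hw : 0 ≤ f b := zero_le_one.trans hf
  have hdepth : log ((b ^ j : ℕ) : ℝ) / log b = j := by
    have : 0 < log b := log_pos (by exact_mod_cast hb)
    push_cast
    rw [log_pow, mul_div_assoc, div_self this.ne', mul_one]
  have hphi := mulLogAddTwo_nonneg (Nat.cast_nonneg h : (0 : ℝ) ≤ h)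
  have hwX : 0 ≤ f b * X := mul_nonneg hw (Nat.cast_nonneg X)
  rw [hdepth]
  calc T (b ^ j) h X
      ≤ C * potential 65 (f b) ((b : ℝ) ^ j) h X * (j + 1) :=
        apply_pow_le_of_recurrence hb hC.le hw hbase hrec j h X
    _ ≤ 65 * C * ((b ^ j : ℕ) + mulLogAddTwo h + f b * X) * (j + 1) := by
        rw [mul_comm 65 C, mul_assoc C 65, potential]
        push_cast
        refine mul_le_mul_of_nonneg_right (mul_le_mul_of_nonneg_left ?_ hC.le) (by positivity)
        linarith [pow_nonneg (Nat.cast_nonneg b : (0 : ℝ) ≤ b) j]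
end

section
/- Iterated-logarithm cost telescoping: For any fixed constant c ≥ 1 and constants k, C, there is a constant C' such that for all sufficiently large n and all h ≤ n: n + h·log n + Σ_{j=1}^{c+1} (h + n/log^{(j)} n) · (log(log^{(j)} n))^k + X·((log^{(c+1)} n)^8)² ≤ C'·(n + h·log h + X·log^{(c)} n), where log^{(j)} denotes the j-times iterated base-2 logarithm (assume n large enough that log^{(c+1)} n ≥ 2). -/
open scoped BigOperators

open Filter

/-- Iterated base-2 logarithm: `itLog 0 x = x`, `itLog (j+1) x = log₂ (itLog j x)`,
so `itLog j` is `log^{(j)}`. -/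
noncomputable def itLog : ℕ → ℝ → ℝ
  | 0, x => x
  | j + 1, x => Real.logb 2 (itLog j x)

lemma itLog_succ (j : ℕ) (x : ℝ) : itLog (j + 1) x = Real.logb 2 (itLog j x) := rfl

/-- For each fixed `j`, `itLog j n → ∞`. -/
lemma tendsto_itLog (j : ℕ) :
    Tendsto (fun n : ℕ => itLog j (n : ℝ)) atTop atTop := by
  induction j with
  | zero => exact tendsto_natCast_atTop_atTop
  | succ j ih =>
    have := (Real.tendsto_logb_atTop (b := 2) one_lt_two).comp ih
    exact this

/-- Eventually `(log₂ x)^m ≤ x`. -/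
lemma ev_pow_logb (m : ℕ) : ∀ᶠ x : ℝ in atTop, (Real.logb 2 x) ^ m ≤ x := by
  have h := Real.isLittleO_pow_log_id_atTop (n := m)
  have hc : (0:ℝ) < (Real.log 2) ^ m := pow_pos (Real.log_pos one_lt_two) m
  filter_upwards [h.def hc, eventually_ge_atTop (1:ℝ)] with x hx hx1
  have hlx : 0 ≤ Real.log x := Real.log_nonneg hx1
  have hx0 : (0:ℝ) ≤ x := le_trans zero_le_one hx1
  simp only [Real.norm_eq_abs, id_eq] at hx
  rw [abs_of_nonneg (pow_nonneg hlx m), abs_of_nonneg hx0] at hx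
  have heq : Real.logb 2 x ^ m = Real.log x ^ m / Real.log 2 ^ m := by
    rw [Real.logb, div_pow]
  rw [heq, div_le_iff₀ hc]
  linarith

/-- `log₂ x ≤ x` for `0 ≤ x`. -/
lemma logb_two_le_self (x : ℝ) (hx : 0 ≤ x) : Real.logb 2 x ≤ x := by
  rcases eq_or_lt_of_le hx with h | h
  · simp [← h]
  · have h1 : Real.log x ≤ x / Real.exp 1 := by
      have h2 := Real.add_one_le_exp (Real.log x - 1)
      have h3 : Real.exp (Real.log x - 1) = x / Real.exp 1 := by
        rw [Real.exp_sub, Real.exp_log h]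
      linarith [h3 ▸ h2]
    have he : (2:ℝ) ≤ Real.exp 1 := by
      have := Real.add_one_le_exp (1:ℝ); linarith
    have h2 : Real.log x ≤ x / 2 :=
      h1.trans (div_le_div_of_nonneg_left hx (by norm_num) he)
    rw [Real.logb, div_le_iff₀ (Real.log_pos one_lt_two)]
    have h3 : x * 0.6931471803 ≤ x * Real.log 2 :=
      mul_le_mul_of_nonneg_left (le_of_lt Real.log_two_gt_d9) hx
    linarith

/-- Chain monotonicity: if all iterated logs up to level `j` are nonnegative,
then `itLog j x ≤ itLog 2 x` for `j ≥ 2`. -/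
lemma itLog_le_itLog_two (x : ℝ) :
    ∀ j, 2 ≤ j → (∀ i, i ≤ j → (0:ℝ) ≤ itLog i x) → itLog j x ≤ itLog 2 x := by
  intro j hj
  induction j, hj using Nat.le_induction with
  | base => intro _; exact le_rfl
  | succ j hj ih =>
    intro hpos
    calc itLog (j + 1) x = Real.logb 2 (itLog j x) := rfl
      _ ≤ itLog j x := logb_two_le_self _ (hpos j (Nat.le_succ j))
      _ ≤ itLog 2 x := ih (fun i hi => hpos i (hi.trans (Nat.le_succ j)))

/-- Eventually `log₂ x ≤ √x`. -/
lemma ev_logb_le_sqrt : ∀ᶠ x : ℝ in atTop, Real.logb 2 x ≤ Real.sqrt x := by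
  filter_upwards [ev_pow_logb 2, eventually_ge_atTop (1:ℝ)] with x h2 h1
  have h0 : 0 ≤ Real.logb 2 x := Real.logb_nonneg one_lt_two h1
  have hx0 : (0:ℝ) ≤ x := le_trans zero_le_one h1
  exact (Real.le_sqrt h0 hx0).mpr h2

/-- Iterated-logarithm cost telescoping.  For fixed constants `c ≥ 1`, `k` and `C > 0`
there are a constant `C'` and a threshold `N` such that for all `n ≥ N` (large enough
that `log^{(c+1)} n ≥ 2`) and all `1 ≤ h ≤ n`:
`C·(n + h·log n + Σ_{j=1}^{c+1} (h + n/log^{(j)} n)·(log(log^{(j)} n))^k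
  + X·((log^{(c+1)} n)^8)²) ≤ C'·(n + h·log h + X·log^{(c)} n)`. -/
theorem iterated_log_telescoping (c k : ℕ) (hc : 1 ≤ c) (C : ℝ) (hC : 0 < C) :
    ∃ C' : ℝ, 0 < C' ∧ ∃ N : ℕ, ∀ n h X : ℕ, N ≤ n → 1 ≤ h → h ≤ n →
      2 ≤ itLog (c + 1) n →
      C * ((n : ℝ) + (h : ℝ) * Real.logb 2 n +
          (∑ j ∈ Finset.Icc 1 (c + 1),
            ((h : ℝ) + (n : ℝ) / itLog j n) * (Real.logb 2 (itLog j n)) ^ k) +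
          (X : ℝ) * ((itLog (c + 1) n) ^ 8) ^ 2)
        ≤ C' * ((n : ℝ) + (h : ℝ) * Real.logb 2 h + (X : ℝ) * itLog c n) := by
  refine ⟨C * (2 * (c : ℝ) + 4), by positivity, ?_⟩
  -- bundle all eventual facts
  have hA : ∀ᶠ n : ℕ in atTop, ∀ j ∈ Finset.Icc 1 (c + 2), (2:ℝ) ≤ itLog j (n:ℝ) :=
    (Finset.Icc 1 (c + 2)).eventually_all.mpr
      (fun j _ => (tendsto_itLog j).eventually_ge_atTop 2)
  have hB : ∀ᶠ n : ℕ in atTop, ∀ j ∈ Finset.Icc 1 (c + 1),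
      (Real.logb 2 (itLog j (n:ℝ))) ^ k ≤ itLog j (n:ℝ) :=
    (Finset.Icc 1 (c + 1)).eventually_all.mpr
      (fun j _ => (tendsto_itLog j).eventually (ev_pow_logb k))
  have hCe : ∀ᶠ n : ℕ in atTop,
      (Real.logb 2 (itLog 1 (n:ℝ))) ^ k ≤ itLog 1 (n:ℝ) :=
    (tendsto_itLog 1).eventually (ev_pow_logb k)
  have hD : ∀ᶠ n : ℕ in atTop,
      (Real.logb 2 (itLog c (n:ℝ))) ^ 16 ≤ itLog c (n:ℝ) :=
    (tendsto_itLog c).eventually (ev_pow_logb 16)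
  have hE : ∀ᶠ n : ℕ in atTop, Real.logb 2 (n:ℝ) ≤ Real.sqrt (n:ℝ) :=
    tendsto_natCast_atTop_atTop.eventually ev_logb_le_sqrt
  obtain ⟨N, hN⟩ := eventually_atTop.mp (hA.and (hB.and (hCe.and (hD.and hE))))
  refine ⟨N, ?_⟩
  intro n h X hn h1 hhn _
  obtain ⟨hA, hB, hCe, hD, hE⟩ := hN n hn
  have hn0 : (0:ℝ) ≤ (n:ℝ) := Nat.cast_nonneg n
  have hh0 : (0:ℝ) ≤ (h:ℝ) := Nat.cast_nonneg h
  have hh1 : (1:ℝ) ≤ (h:ℝ) := by exact_mod_cast h1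
  have hn1 : (1:ℝ) ≤ (n:ℝ) := le_trans hh1 (by exact_mod_cast hhn)
  have hX0 : (0:ℝ) ≤ (X:ℝ) := Nat.cast_nonneg X
  have hpos : ∀ i, i ≤ c + 2 → (0:ℝ) ≤ itLog i (n:ℝ) := by
    intro i hi
    rcases Nat.eq_zero_or_pos i with h0 | h0
    · subst h0; exact hn0
    · exact le_trans (by norm_num) (hA i (Finset.mem_Icc.mpr ⟨h0, hi⟩))
  have hchain : ∀ j, 1 ≤ j → j ≤ c + 1 → itLog (j + 1) (n:ℝ) ≤ itLog 2 (n:ℝ) := by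
    intro j hj1 hj2
    exact itLog_le_itLog_two (n:ℝ) (j + 1) (by omega) (fun i hi => hpos i (by omega))
  -- sum bound
  have hterm : ∀ j ∈ Finset.Icc 1 (c + 1),
      ((h : ℝ) + (n : ℝ) / itLog j (n:ℝ)) * (Real.logb 2 (itLog j (n:ℝ))) ^ k ≤
        (h : ℝ) * Real.logb 2 (n:ℝ) + (n:ℝ) := by
    intro j hj
    rw [Finset.mem_Icc] at hj
    have hLj : (2:ℝ) ≤ itLog j (n:ℝ) :=
      hA j (Finset.mem_Icc.mpr ⟨hj.1, hj.2.trans (Nat.le_succ _)⟩)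
    have hLj0 : (0:ℝ) < itLog j (n:ℝ) := lt_of_lt_of_le two_pos hLj
    have hlog_eq : Real.logb 2 (itLog j (n:ℝ)) = itLog (j + 1) (n:ℝ) := rfl
    have hnn : 0 ≤ Real.logb 2 (itLog j (n:ℝ)) := by
      rw [hlog_eq]; exact hpos (j + 1) (by omega)
    have hb1 : (Real.logb 2 (itLog j (n:ℝ))) ^ k ≤ Real.logb 2 (n:ℝ) := by
      calc (Real.logb 2 (itLog j (n:ℝ))) ^ k
          ≤ (itLog 2 (n:ℝ)) ^ k := by
            apply pow_le_pow_left₀ hnn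
            rw [hlog_eq]; exact hchain j hj.1 hj.2
        _ ≤ itLog 1 (n:ℝ) := hCe
        _ = Real.logb 2 (n:ℝ) := rfl
    have hb2 : (n:ℝ) / itLog j (n:ℝ) * (Real.logb 2 (itLog j (n:ℝ))) ^ k ≤ (n:ℝ) := by
      calc (n:ℝ) / itLog j (n:ℝ) * (Real.logb 2 (itLog j (n:ℝ))) ^ k
          ≤ (n:ℝ) / itLog j (n:ℝ) * itLog j (n:ℝ) :=
            mul_le_mul_of_nonneg_left (hB j (Finset.mem_Icc.mpr hj))
              (div_nonneg hn0 hLj0.le)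
        _ = (n:ℝ) := div_mul_cancel₀ _ (ne_of_gt hLj0)
    calc ((h : ℝ) + (n : ℝ) / itLog j (n:ℝ)) * (Real.logb 2 (itLog j (n:ℝ))) ^ k
        = (h:ℝ) * (Real.logb 2 (itLog j (n:ℝ))) ^ k
            + (n:ℝ) / itLog j (n:ℝ) * (Real.logb 2 (itLog j (n:ℝ))) ^ k := by ring
      _ ≤ (h : ℝ) * Real.logb 2 (n:ℝ) + (n:ℝ) :=
          add_le_add (mul_le_mul_of_nonneg_left hb1 hh0) hb2
  have hsum : (∑ j ∈ Finset.Icc 1 (c + 1),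
      ((h : ℝ) + (n : ℝ) / itLog j (n:ℝ)) * (Real.logb 2 (itLog j (n:ℝ))) ^ k) ≤
      ((c:ℝ) + 1) * ((h : ℝ) * Real.logb 2 (n:ℝ) + (n:ℝ)) := by
    have hcard : (Finset.Icc 1 (c + 1)).card = c + 1 := by
      rw [Nat.card_Icc]; omega
    calc (∑ j ∈ Finset.Icc 1 (c + 1),
        ((h : ℝ) + (n : ℝ) / itLog j (n:ℝ)) * (Real.logb 2 (itLog j (n:ℝ))) ^ k)
        ≤ (Finset.Icc 1 (c + 1)).card •
            ((h : ℝ) * Real.logb 2 (n:ℝ) + (n:ℝ)) :=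
          Finset.sum_le_card_nsmul _ _ _ hterm
      _ = ((c:ℝ) + 1) * ((h : ℝ) * Real.logb 2 (n:ℝ) + (n:ℝ)) := by
          rw [hcard, nsmul_eq_mul]; push_cast; ring
  -- h * log n ≤ n + 2 h log h
  have hP4 : (h:ℝ) * Real.logb 2 (n:ℝ) ≤
      (n:ℝ) + 2 * ((h:ℝ) * Real.logb 2 (h:ℝ)) := by
    have hlh0 : 0 ≤ (h:ℝ) * Real.logb 2 (h:ℝ) :=
      mul_nonneg hh0 (Real.logb_nonneg one_lt_two hh1)
    rcases le_or_gt ((h:ℝ) ^ 2) (n:ℝ) with hcase | hcase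
    · have hhs : (h:ℝ) ≤ Real.sqrt (n:ℝ) := (Real.le_sqrt hh0 hn0).mpr hcase
      have hln0 : 0 ≤ Real.logb 2 (n:ℝ) := Real.logb_nonneg one_lt_two hn1
      have hmul : (h:ℝ) * Real.logb 2 (n:ℝ) ≤ Real.sqrt (n:ℝ) * Real.sqrt (n:ℝ) :=
        mul_le_mul hhs hE hln0 (Real.sqrt_nonneg _)
      rw [Real.mul_self_sqrt hn0] at hmul
      linarith
    · have hn0' : (0:ℝ) < (n:ℝ) := lt_of_lt_of_le zero_lt_one hn1
      have hlog : Real.logb 2 (n:ℝ) ≤ Real.logb 2 ((h:ℝ) ^ 2) :=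
        Real.logb_le_logb_of_le one_lt_two hn0' hcase.le
      rw [Real.logb_pow] at hlog
      push_cast at hlog
      have := mul_le_mul_of_nonneg_left hlog hh0
      linarith
  -- X term
  have hLc : (2:ℝ) ≤ itLog c (n:ℝ) :=
    hA c (Finset.mem_Icc.mpr ⟨hc, by omega⟩)
  have hXterm : (X:ℝ) * ((itLog (c + 1) (n:ℝ)) ^ 8) ^ 2 ≤ (X:ℝ) * itLog c (n:ℝ) := by
    have h16 : ((itLog (c + 1) (n:ℝ)) ^ 8) ^ 2 = (Real.logb 2 (itLog c (n:ℝ))) ^ 16 := by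
      rw [← pow_mul]
      rfl
    rw [h16]
    exact mul_le_mul_of_nonneg_left hD hX0
  have hXL : 0 ≤ (X:ℝ) * itLog c (n:ℝ) :=
    mul_nonneg hX0 (le_trans (by norm_num) hLc)
  have hlh0 : 0 ≤ (h:ℝ) * Real.logb 2 (h:ℝ) :=
    mul_nonneg hh0 (Real.logb_nonneg one_lt_two hh1)
  have hc0 : (0:ℝ) ≤ (c:ℝ) := Nat.cast_nonneg c
  have core : (n : ℝ) + (h : ℝ) * Real.logb 2 (n:ℝ) +
      (∑ j ∈ Finset.Icc 1 (c + 1),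
        ((h : ℝ) + (n : ℝ) / itLog j (n:ℝ)) * (Real.logb 2 (itLog j (n:ℝ))) ^ k) +
      (X : ℝ) * ((itLog (c + 1) (n:ℝ)) ^ 8) ^ 2 ≤
      (2 * (c:ℝ) + 4) * ((n : ℝ) + (h : ℝ) * Real.logb 2 (h:ℝ) + (X : ℝ) * itLog c (n:ℝ)) := by
    have step1 : (n : ℝ) + (h : ℝ) * Real.logb 2 (n:ℝ) +
        (∑ j ∈ Finset.Icc 1 (c + 1),
          ((h : ℝ) + (n : ℝ) / itLog j (n:ℝ)) * (Real.logb 2 (itLog j (n:ℝ))) ^ k) +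
        (X : ℝ) * ((itLog (c + 1) (n:ℝ)) ^ 8) ^ 2 ≤
        ((c:ℝ) + 2) * ((h:ℝ) * Real.logb 2 (n:ℝ)) + ((c:ℝ) + 2) * (n:ℝ) +
          (X:ℝ) * itLog c (n:ℝ) := by
      nlinarith [hsum, hXterm]
    have step2 : ((c:ℝ) + 2) * ((h:ℝ) * Real.logb 2 (n:ℝ)) ≤
        ((c:ℝ) + 2) * ((n:ℝ) + 2 * ((h:ℝ) * Real.logb 2 (h:ℝ))) :=
      mul_le_mul_of_nonneg_left hP4 (by linarith)
    have step3 : (X:ℝ) * itLog c (n:ℝ) ≤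
        (2 * (c:ℝ) + 4) * ((X:ℝ) * itLog c (n:ℝ)) := by
      nlinarith
    nlinarith [step1, step2, step3, mul_nonneg hc0 hlh0, mul_nonneg hc0 hn0]
  calc C * ((n : ℝ) + (h : ℝ) * Real.logb 2 (n:ℝ) +
      (∑ j ∈ Finset.Icc 1 (c + 1),
        ((h : ℝ) + (n : ℝ) / itLog j (n:ℝ)) * (Real.logb 2 (itLog j (n:ℝ))) ^ k) +
      (X : ℝ) * ((itLog (c + 1) (n:ℝ)) ^ 8) ^ 2)
      ≤ C * ((2 * (c:ℝ) + 4) *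
          ((n : ℝ) + (h : ℝ) * Real.logb 2 (h:ℝ) + (X : ℝ) * itLog c (n:ℝ))) :=
        mul_le_mul_of_nonneg_left core hC.le
    _ = C * (2 * (c:ℝ) + 4) *
          ((n : ℝ) + (h : ℝ) * Real.logb 2 (h:ℝ) + (X : ℝ) * itLog c (n:ℝ)) := by ring
end
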